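/- arXiv:math/0510622 — 3 statements merged into one kernel-verified Lean document; each statement's English description precedes it below -/
import Mathlib

section
/- Let n ≥ 2, 1 ≤ k ≤ n-1, and let 0 = V_0 ⊊ V_1 ⊊ ⋯ ⊊ V_k = V be a flag of length k in V, where V = {(x_1,…,x_n) ∈ ℝ^n : x_1 + ⋯ + x_n = 0}. Then the set T = {A ∈ Q_n : A·V_i ⊆ V_{i-1} for all i = 1,…,k} is a maximal element of Nil_k(Q_n), and its nilpotency class equals k. -/
namespace NilSg

variable {M : Type*}

/-- `T ⊆ M` is closed under multiplication. -/
def IsSubsg [Mul M] (T : Set M) : Prop :=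
  ∀ ⦃a⦄, a ∈ T → ∀ ⦃b⦄, b ∈ T → a * b ∈ T

/-- Every product of exactly `k` elements of `T` equals `z`
(such products are the products of nonempty lists `a :: l` of elements of `T`). -/
def ProdEq [Mul M] (z : M) (T : Set M) (k : ℕ) : Prop :=
  ∀ (a : M) (l : List M), a ∈ T → (∀ x ∈ l, x ∈ T) → l.length + 1 = k →
    l.foldl (· * ·) a = z

/-- `T` is a nilpotent subsemigroup with respect to the zero element `z`. -/
def IsNilSubsg [Mul M] (z : M) (T : Set M) : Prop :=
  IsSubsg T ∧ ∃ k, 0 < k ∧ ProdEq z T k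

/-- The nilpotency class of `T`: the minimal `k ≥ 1` such that every product of `k`
elements of `T` equals `z`. -/
noncomputable def nilClass [Mul M] (z : M) (T : Set M) : ℕ :=
  sInf {k | 0 < k ∧ ProdEq z T k}

/-- `T` is a nilpotent subsemigroup of `S` (with zero `z`). -/
def NilIn [Mul M] (z : M) (S : Set M) (T : Set M) : Prop :=
  T ⊆ S ∧ IsNilSubsg z T

/-- `T` is a nilpotent subsemigroup of `S` (with zero `z`) of nilpotency class at most `k`. -/
def NilLe [Mul M] (z : M) (S : Set M) (k : ℕ) (T : Set M) : Prop :=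
  T ⊆ S ∧ IsNilSubsg z T ∧ nilClass z T ≤ k

/-- `Ω n`: the semigroup of `n × n` real matrices with nonnegative entries. -/
def Omega (n : ℕ) : Set (Matrix (Fin n) (Fin n) ℝ) :=
  {A | ∀ i j, 0 ≤ A i j}

/-- `Q n`: the semigroup of `n × n` real matrices all of whose row sums and
column sums equal `1`. -/
def Qset (n : ℕ) : Set (Matrix (Fin n) (Fin n) ℝ) :=
  {A | (∀ i, ∑ j, A i j = 1) ∧ (∀ j, ∑ i, A i j = 1)}

/-- `D n`: the semigroup of `n × n` doubly stochastic real matrices. -/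
def Dset (n : ℕ) : Set (Matrix (Fin n) (Fin n) ℝ) :=
  {A | (∀ i j, 0 ≤ A i j) ∧ (∀ i, ∑ j, A i j = 1) ∧ (∀ j, ∑ i, A i j = 1)}

/-- The matrix all of whose entries equal `1/n`: the zero element of `Q n` and `D n`. -/
noncomputable def On (n : ℕ) : Matrix (Fin n) (Fin n) ℝ :=
  Matrix.of fun _ _ => (n : ℝ)⁻¹

/-- The hyperplane `V` of all vectors whose coordinates sum to `0`. -/
def Vsub (n : ℕ) : Submodule ℝ (Fin n → ℝ) where
  carrier := {x | ∑ i, x i = 0}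
  add_mem' := by
    intro a b ha hb
    simp only [Set.mem_setOf_eq, Pi.add_apply] at *
    simp [Finset.sum_add_distrib, ha, hb]
  zero_mem' := by simp
  smul_mem' := by
    intro c x hx
    simp only [Set.mem_setOf_eq, Pi.smul_apply, smul_eq_mul] at *
    simp [← Finset.mul_sum, hx]

/-!
Matrices in `Q n` fix `1` and preserve `V`, and such a matrix is `O_n` exactly when it kills `V`.
For `y ∈ V \ V_i` and `u ∈ V_i`, a functional `a` vanishing on `V_i` and on `1` with
`a ⬝ᵥ y = 1` gives the rank-one map `x ↦ (a ⬝ᵥ x) • u` on `V`; it extends to an element of `T`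
sending `y` to `u`. Chaining such maps down the flag yields, for every `y ∉ V_i`, a product of
`i` elements of `T` not killing `y`, whence the class is exactly `k`, and, for every `x ∈ V_j`, a
product of `k - j` elements of `T` with `x` in its image. If `B` lies in a nilpotent
`T' ⊇ T` of class `≤ k` but `B x ∉ V_i` for some `x ∈ V_(i+1)`, sandwiching `B` between
products of these two kinds gives a product of `k` elements of `T'` that is not `O_n`.
-/

section Semigroup

variable [Mul M] {z : M} {T S : Set M} {k m : ℕ}

theorem IsSubsg.foldl_mem (hT : IsSubsg T) :
    ∀ (l : List M) {a : M}, a ∈ T → (∀ x ∈ l, x ∈ T) → l.foldl (· * ·) a ∈ T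
  | [], _, ha, _ => ha
  | b :: l, _, ha, hl =>
    hT.foldl_mem l (hT ha (hl b List.mem_cons_self)) fun x hx => hl x (List.mem_cons_of_mem b hx)

theorem ProdEq.mono (hT : IsSubsg T) (h : ProdEq z T k) (hk : 0 < k) (hkm : k ≤ m) :
    ProdEq z T m := by
  intro a l ha hl hlen
  rw [← List.take_append_drop (m - k) l, List.foldl_append]
  refine h _ _ (hT.foldl_mem _ ha fun x hx => hl x (List.mem_of_mem_take hx))
    (fun x hx => hl x (List.mem_of_mem_drop hx)) ?_
  rw [List.length_drop]
  omega

theorem IsNilSubsg.prodEq_nilClass (h : IsNilSubsg z T) :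
    0 < nilClass z T ∧ ProdEq z T (nilClass z T) :=
  Nat.sInf_mem (s := {k | 0 < k ∧ ProdEq z T k}) h.2

theorem NilLe.prodEq (h : NilLe z S k T) : ProdEq z T k :=
  have hclass := h.2.1.prodEq_nilClass
  hclass.2.mono h.2.1.1 hclass.1 h.2.2

theorem nilClass_eq_of_prodEq (h : ProdEq z T k) (hk : 0 < k)
    (hlt : ∀ m, 0 < m → m < k → ¬ ProdEq z T m) : nilClass z T = k := by
  refine le_antisymm (Nat.sInf_le ⟨hk, h⟩) (not_lt.1 fun hlt' => ?_)
  have hmem : 0 < nilClass z T ∧ ProdEq z T (nilClass z T) :=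
    Nat.sInf_mem (s := {k | 0 < k ∧ ProdEq z T k}) ⟨k, hk, h⟩
  exact hlt _ hmem.1 hlt' hmem.2

end Semigroup

theorem prodEq_iff_list_prod [Monoid M] {z : M} {T : Set M} {k : ℕ} (hk : 0 < k) :
    ProdEq z T k ↔ ∀ l : List M, (∀ x ∈ l, x ∈ T) → l.length = k → l.prod = z := by
  have hfoldl (a : M) (l : List M) : l.foldl (· * ·) a = (a :: l).prod := by
    rw [List.prod_cons, List.prod_eq_foldl, ← List.foldl_assoc (op := fun x y : M => x * y),
      mul_one]
  constructor
  · rintro h (_ | ⟨a, l⟩) hl hlen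
    · exact absurd hlen hk.ne
    · rw [← hfoldl]
      exact h a l (hl a List.mem_cons_self) (fun x hx => hl x (List.mem_cons_of_mem a hx)) hlen
  · intro h a l ha hl hlen
    rw [hfoldl]
    exact h _ (List.forall_mem_cons.2 ⟨ha, hl⟩) hlen

section StochasticMatrices

open Matrix

variable {n : ℕ} {A : Matrix (Fin n) (Fin n) ℝ} {x : Fin n → ℝ}

theorem mem_Vsub_iff : x ∈ Vsub n ↔ 1 ⬝ᵥ x = 0 := by
  rw [one_dotProduct]
  rfl

theorem mem_Qset_iff : A ∈ Qset n ↔ A *ᵥ 1 = 1 ∧ 1 ᵥ* A = 1 := by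
  simp [Qset, funext_iff, mulVec, vecMul, dotProduct]

def qSubmonoid : Submonoid (Matrix (Fin n) (Fin n) ℝ) where
  carrier := Qset n
  mul_mem' {A B} hA hB := by
    rw [mem_Qset_iff] at hA hB ⊢
    exact ⟨by rw [← mulVec_mulVec, hB.1, hA.1], by rw [← vecMul_vecMul, hA.2, hB.2]⟩
  one_mem' := mem_Qset_iff.2 ⟨one_mulVec 1, vecMul_one 1⟩

theorem mulVec_mem_Vsub (hA : A ∈ Qset n) (hx : x ∈ Vsub n) : A *ᵥ x ∈ Vsub n := by
  rw [mem_Vsub_iff, dotProduct_mulVec, (mem_Qset_iff.1 hA).2, ← mem_Vsub_iff]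
  exact hx

theorem On_mulVec_of_mem_Vsub (hx : x ∈ Vsub n) : On n *ᵥ x = 0 := by
  funext i
  simp only [On, mulVec, dotProduct, of_apply, ← Finset.mul_sum]
  rw [← one_dotProduct, mem_Vsub_iff.1 hx, mul_zero, Pi.zero_apply]

theorem eq_On_of_mulVec_eq_zero (hA : A ∈ Qset n) (h : ∀ x ∈ Vsub n, A *ᵥ x = 0) :
    A = On n := by
  ext i j
  have hn : (n : ℝ) ≠ 0 := Nat.cast_ne_zero.2 j.pos.ne'
  have hx : Pi.single j 1 - (n : ℝ)⁻¹ • 1 ∈ Vsub n := by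
    rw [mem_Vsub_iff, dotProduct_sub, dotProduct_smul, one_dotProduct, one_dotProduct]
    simp [hn]
  have hcol := congrFun (h _ hx) i
  rw [mulVec_sub, mulVec_smul, mulVec_single_one, (mem_Qset_iff.1 hA).1] at hcol
  simpa [On, sub_eq_zero] using hcol

noncomputable def qRankOne (u a : Fin n → ℝ) : Matrix (Fin n) (Fin n) ℝ :=
  vecMulVec u a + On n

theorem qRankOne_mulVec (u a : Fin n → ℝ) (hx : x ∈ Vsub n) :
    qRankOne u a *ᵥ x = (a ⬝ᵥ x) • u := by
  rw [qRankOne, add_mulVec, vecMulVec_mulVec, On_mulVec_of_mem_Vsub hx, add_zero,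
    op_smul_eq_smul]

theorem qRankOne_mem_Qset [NeZero n] {u a : Fin n → ℝ} (hu : u ∈ Vsub n) (ha : a ⬝ᵥ 1 = 0) :
    qRankOne u a ∈ Qset n := by
  have hn : (n : ℝ) ≠ 0 := Nat.cast_ne_zero.2 (NeZero.ne n)
  rw [mem_Qset_iff, qRankOne, add_mulVec, vecMulVec_mulVec, ha, vecMul_add, vecMul_vecMulVec,
    mem_Vsub_iff.1 hu]
  constructor <;> funext i <;> simp [On, mulVec, vecMul, dotProduct, hn]

theorem exists_dotProduct_eq_one [NeZero n] {p : Submodule ℝ (Fin n → ℝ)} (hp : p ≤ Vsub n)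
    {y : Fin n → ℝ} (hy : y ∈ Vsub n) (hyp : y ∉ p) :
    ∃ a : Fin n → ℝ, a ⬝ᵥ y = 1 ∧ a ⬝ᵥ 1 = 0 ∧ ∀ x ∈ p, a ⬝ᵥ x = 0 := by
  set q := p ⊔ Submodule.span ℝ {1}
  have hspan : Submodule.span ℝ {1} ⊓ Vsub n = ⊥ := by
    rw [Submodule.eq_bot_iff]
    rintro _ hx
    obtain ⟨h1, hV⟩ := Submodule.mem_inf.1 hx
    obtain ⟨c, rfl⟩ := Submodule.mem_span_singleton.1 h1
    rw [mem_Vsub_iff, dotProduct_smul, one_dotProduct] at hV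
    simp_all [NeZero.ne n]
  -- the modular law: `q ⊓ V = p ⊔ (span {1} ⊓ V) = p`
  have hyq : y ∉ q := fun h => hyp <| by
    simpa [q, sup_inf_assoc_of_le _ hp, hspan] using Submodule.mem_inf.2 ⟨h, hy⟩
  obtain ⟨f, hfy, hfq⟩ := Submodule.exists_dual_map_eq_bot_of_notMem hyq inferInstance
  have hf : ∀ x ∈ q, f x = 0 := fun x hx =>
    (Submodule.mem_bot ℝ).1 (hfq ▸ Submodule.mem_map_of_mem hx)
  have hdot (x : Fin n → ℝ) :
      ((f y)⁻¹ • (dotProductEquiv ℝ (Fin n)).symm f) ⬝ᵥ x = (f y)⁻¹ * f x := by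
    rw [smul_dotProduct, ← dotProductEquiv_apply_apply, LinearEquiv.apply_symm_apply, smul_eq_mul]
  refine ⟨(f y)⁻¹ • (dotProductEquiv ℝ (Fin n)).symm f, ?_, ?_, fun x hx => ?_⟩ <;> rw [hdot]
  · exact inv_mul_cancel₀ hfy
  · rw [hf 1 (Submodule.mem_sup_right (Submodule.mem_span_singleton_self 1)), mul_zero]
  · rw [hf x (Submodule.mem_sup_left hx), mul_zero]

end StochasticMatrices

section Flag

open Matrix

variable {n k : ℕ} {W : ℕ → Submodule ℝ (Fin n → ℝ)}

/-- A flag `0 = W 0 < W 1 < ⋯ < W k = V` of length `k` in `V`, continued by `W i = V` for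
`i ≥ k`. -/
structure IsFlag (W : ℕ → Submodule ℝ (Fin n → ℝ)) (k : ℕ) : Prop where
  monotone : Monotone W
  bot : W 0 = ⊥
  eq_Vsub : ∀ i, k ≤ i → W i = Vsub n
  lt_succ : ∀ i < k, W i < W (i + 1)

theorem IsFlag.le_Vsub (hW : IsFlag W k) (i : ℕ) : W i ≤ Vsub n :=
  hW.eq_Vsub (max i k) (le_max_right i k) ▸ hW.monotone (le_max_left i k)

theorem isFlag_clamp {V : Fin (k + 1) → Submodule ℝ (Fin n → ℝ)} (h0 : V 0 = ⊥)
    (htop : V (Fin.last k) = Vsub n) (hmono : StrictMono V) :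
    IsFlag (fun i => V (Fin.clamp i k)) k where
  monotone i j hij := hmono.monotone (Fin.le_def.2 (by simp only [Fin.coe_clamp]; omega))
  bot := by rwa [show Fin.clamp 0 k = 0 from Fin.ext (by simp)]
  eq_Vsub i hi := by rwa [show Fin.clamp i k = Fin.last k from Fin.ext (by simpa using hi)]
  lt_succ i hi := hmono (Fin.lt_def.2 (by simp only [Fin.coe_clamp]; omega))

def loweringSet (W : ℕ → Submodule ℝ (Fin n → ℝ)) : Set (Matrix (Fin n) (Fin n) ℝ) :=
  {A | A ∈ Qset n ∧ ∀ i, ∀ x ∈ W (i + 1), A *ᵥ x ∈ W i}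

theorem setOf_flag_eq_loweringSet (V : Fin (k + 1) → Submodule ℝ (Fin n → ℝ))
    (htop : V (Fin.last k) = Vsub n) :
    {A | A ∈ Qset n ∧ ∀ i : Fin k, ∀ x ∈ V i.succ, A.mulVec x ∈ V i.castSucc} =
      loweringSet (fun i => V (Fin.clamp i k)) := by
  have hsucc (i : ℕ) (hi : i < k) : V (Fin.clamp (i + 1) k) = V (Fin.succ ⟨i, hi⟩) :=
    congrArg V (Fin.ext (by simp; omega))
  have hcast (i : ℕ) (hi : i < k) : V (Fin.clamp i k) = V (Fin.castSucc ⟨i, hi⟩) :=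
    congrArg V (Fin.ext (by simp; omega))
  have hlast (i : ℕ) (hi : k ≤ i) : V (Fin.clamp i k) = Vsub n :=
    htop ▸ congrArg V (Fin.ext (by simpa using hi))
  ext A
  refine and_congr_right fun hA => ⟨fun h i x hx => ?_, fun h i x hx => ?_⟩ <;> beta_reduce at hx ⊢
  · rcases lt_or_ge i k with hi | hi
    · rw [hcast i hi]
      exact h ⟨i, hi⟩ x (hsucc i hi ▸ hx)
    · rw [hlast i hi]
      exact mulVec_mem_Vsub hA (hlast (i + 1) (by omega) ▸ hx)
  · rw [← hsucc i i.isLt] at hx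
    rw [← hcast i i.isLt]
    exact h i x hx

theorem isSubsg_loweringSet (hW : Monotone W) : IsSubsg (loweringSet W) := fun A hA B hB =>
  ⟨qSubmonoid.mul_mem hA.1 hB.1, fun i x hx => by
    rw [← mulVec_mulVec]
    exact hA.2 i _ (hW (Nat.le_succ i) (hB.2 i x hx))⟩

theorem list_prod_mulVec_mem {l : List (Matrix (Fin n) (Fin n) ℝ)}
    (hl : ∀ A ∈ l, A ∈ loweringSet W) {i : ℕ} {x : Fin n → ℝ} (hx : x ∈ W (i + l.length)) :
    l.prod *ᵥ x ∈ W i := by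
  induction l generalizing i with
  | nil => simpa using hx
  | cons A l ih =>
    rw [List.prod_cons, ← mulVec_mulVec]
    refine (hl A List.mem_cons_self).2 i _ (ih (fun B hB => hl B (List.mem_cons_of_mem A hB)) ?_)
    rwa [List.length_cons, ← add_assoc, add_right_comm] at hx

theorem prodEq_loweringSet (hW : IsFlag W k) : ProdEq (On n) (loweringSet W) k := by
  rcases k.eq_zero_or_pos with rfl | hk
  · intro _ _ _ _ hlen
    omega
  rw [prodEq_iff_list_prod hk]
  intro l hl hlen
  refine eq_On_of_mulVec_eq_zero (qSubmonoid.list_prod_mem fun A hA => (hl A hA).1) fun x hx => ?_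
  have hx0 := list_prod_mulVec_mem hl (i := 0) (x := x)
    (by rwa [zero_add, hlen, hW.eq_Vsub k le_rfl])
  rwa [hW.bot, Submodule.mem_bot] at hx0

theorem exists_mem_loweringSet_mulVec_eq (hW : IsFlag W k) {i : ℕ} {y u : Fin n → ℝ}
    (hy : y ∈ Vsub n) (hyi : y ∉ W i) (hu : u ∈ W i) :
    ∃ A ∈ loweringSet W, A *ᵥ y = u := by
  have : NeZero n := ⟨by rintro rfl; exact hyi (Subsingleton.elim 0 y ▸ zero_mem _)⟩
  obtain ⟨a, hay, ha1, haW⟩ := exists_dotProduct_eq_one (hW.le_Vsub i) hy hyi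
  refine ⟨qRankOne u a, ⟨qRankOne_mem_Qset (hW.le_Vsub i hu) ha1, fun j x hx => ?_⟩,
    by rw [qRankOne_mulVec u a hy, hay, one_smul]⟩
  rw [qRankOne_mulVec u a (hW.le_Vsub _ hx)]
  rcases le_or_gt (j + 1) i with hji | hij
  · rw [haW x (hW.monotone hji hx), zero_smul]
    exact zero_mem _
  · exact (W j).smul_mem _ (hW.monotone (by omega) hu)

theorem exists_list_prod_mulVec_ne_zero (hW : IsFlag W k) :
    ∀ (i : ℕ) {y : Fin n → ℝ}, y ∈ Vsub n → y ∉ W i →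
      ∃ l : List (Matrix (Fin n) (Fin n) ℝ),
        (∀ A ∈ l, A ∈ loweringSet W) ∧ l.length = i ∧ l.prod *ᵥ y ≠ 0
  | 0, _, _, hy0 => ⟨[], by simp, rfl, by simpa [hW.bot] using hy0⟩
  | i + 1, y, hy, hyi => by
    have hik : i < k := by
      by_contra h
      exact hyi (hW.eq_Vsub (i + 1) (by omega) ▸ hy)
    obtain ⟨u, hu, hui⟩ := SetLike.exists_of_lt (hW.lt_succ i hik)
    obtain ⟨A, hA, hAy⟩ := exists_mem_loweringSet_mulVec_eq hW hy hyi hu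
    obtain ⟨l, hl, hlen, hlu⟩ := exists_list_prod_mulVec_ne_zero hW i (hW.le_Vsub _ hu) hui
    refine ⟨l ++ [A], fun B hB => ?_, by simp [hlen], ?_⟩
    · rcases List.mem_append.1 hB with hB | hB
      · exact hl B hB
      · rwa [List.mem_singleton.1 hB]
    · rwa [List.prod_append, List.prod_singleton, ← mulVec_mulVec, hAy]

theorem exists_list_prod_mulVec_eq (hW : IsFlag W k) {j d : ℕ} (hjd : j + d = k)
    {x : Fin n → ℝ} (hx : x ∈ W j) :
    ∃ z ∈ Vsub n, ∃ l : List (Matrix (Fin n) (Fin n) ℝ),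
      (∀ A ∈ l, A ∈ loweringSet W) ∧ l.length = d ∧ l.prod *ᵥ z = x := by
  induction d generalizing j x with
  | zero => exact ⟨x, hW.le_Vsub j hx, [], by simp, rfl, by simp⟩
  | succ d ih =>
    obtain ⟨x', hx', hx'j⟩ := SetLike.exists_of_lt (hW.lt_succ j (by omega))
    obtain ⟨A, hA, hAx'⟩ := exists_mem_loweringSet_mulVec_eq hW (hW.le_Vsub _ hx') hx'j hx
    obtain ⟨z, hz, l, hl, hlen, hlz⟩ := ih (by omega) hx'
    refine ⟨z, hz, A :: l, List.forall_mem_cons.2 ⟨hA, hl⟩, by simp [hlen], ?_⟩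
    rw [List.prod_cons, ← mulVec_mulVec, hlz, hAx']

theorem not_prodEq_loweringSet (hW : IsFlag W k) {m : ℕ} (hm : 0 < m) (hmk : m < k) :
    ¬ ProdEq (On n) (loweringSet W) m := by
  intro h
  obtain ⟨y, hy, hyk⟩ := SetLike.exists_of_lt (hW.lt_succ (k - 1) (by omega))
  rw [Nat.sub_add_cancel (by omega)] at hy
  obtain ⟨l, hl, hlen, hly⟩ := exists_list_prod_mulVec_ne_zero hW m (hW.le_Vsub k hy)
    fun hym => hyk (hW.monotone (by omega) hym)
  rw [(prodEq_iff_list_prod hm).1 h l hl hlen, On_mulVec_of_mem_Vsub (hW.le_Vsub k hy)] at hly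
  exact hly rfl

theorem nilClass_loweringSet (hW : IsFlag W k) (hk : 0 < k) :
    nilClass (On n) (loweringSet W) = k :=
  nilClass_eq_of_prodEq (prodEq_loweringSet hW) hk fun _ hm hmk => not_prodEq_loweringSet hW hm hmk

theorem subset_loweringSet_of_prodEq (hW : IsFlag W k) {T : Set (Matrix (Fin n) (Fin n) ℝ)}
    (hTQ : T ⊆ Qset n) (hWT : loweringSet W ⊆ T) (hT : ProdEq (On n) T k) :
    T ⊆ loweringSet W := by
  intro B hB
  refine ⟨hTQ hB, fun i x hx => ?_⟩
  by_contra hBx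
  have hBxV : B *ᵥ x ∈ Vsub n := mulVec_mem_Vsub (hTQ hB) (hW.le_Vsub _ hx)
  have hik : i < k := by
    by_contra h
    exact hBx (hW.eq_Vsub i (by omega) ▸ hBxV)
  obtain ⟨l₁, hl₁, hlen₁, hl₁Bx⟩ := exists_list_prod_mulVec_ne_zero hW i hBxV hBx
  obtain ⟨z, hz, l₂, hl₂, hlen₂, hl₂z⟩ :=
    exists_list_prod_mulVec_eq hW (d := k - (i + 1)) (by omega) hx
  -- `l₁ ++ B :: l₂` is a product of `k` elements of `T` which does not vanish at `z`
  have hprod := (prodEq_iff_list_prod (by omega)).1 hT (l₁ ++ B :: l₂)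
    (by simpa [or_imp, forall_and] using ⟨fun A hA => hWT (hl₁ A hA), hB,
      fun A hA => hWT (hl₂ A hA)⟩)
    (by simp only [List.length_append, List.length_cons]; omega)
  apply hl₁Bx
  rw [← hl₂z, mulVec_mulVec, mulVec_mulVec, mul_assoc, ← List.prod_cons, ← List.prod_append, hprod,
    On_mulVec_of_mem_Vsub hz]

end Flag

theorem stmt12_general (n k : ℕ) (hk1 : 1 ≤ k)
    (V : Fin (k + 1) → Submodule ℝ (Fin n → ℝ))
    (h0 : V 0 = ⊥) (htop : V (Fin.last k) = Vsub n) (hmono : StrictMono V) :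
    Maximal (NilLe (On n) (Qset n) k)
        {A | A ∈ Qset n ∧ ∀ i : Fin k, ∀ x ∈ V i.succ, A.mulVec x ∈ V i.castSucc} ∧
      nilClass (On n)
        {A | A ∈ Qset n ∧ ∀ i : Fin k, ∀ x ∈ V i.succ, A.mulVec x ∈ V i.castSucc} = k := by
  have hW := isFlag_clamp h0 htop hmono
  have hclass := nilClass_loweringSet hW hk1
  rw [setOf_flag_eq_loweringSet V htop]
  refine ⟨⟨⟨fun A hA => hA.1, ⟨isSubsg_loweringSet hW.monotone, k, hk1, prodEq_loweringSet hW⟩,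
    hclass.le⟩, fun T hT hWT => subset_loweringSet_of_prodEq hW hT.1 hWT hT.prodEq⟩, hclass⟩

/-- For a flag `0 = V_0 ⊊ V_1 ⊊ ⋯ ⊊ V_k = V` of length `k` in the
hyperplane `V` of sum-zero vectors, the set
`T = {A ∈ Q_n : A·V_i ⊆ V_{i-1} for all i}` is a maximal element of `Nil_k(Q_n)`,
and its nilpotency class equals `k`. -/
theorem stmt12 (n k : ℕ) (hn : 2 ≤ n) (hk1 : 1 ≤ k) (hkn : k ≤ n - 1)
    (V : Fin (k + 1) → Submodule ℝ (Fin n → ℝ))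
    (h0 : V 0 = ⊥) (htop : V (Fin.last k) = Vsub n) (hmono : StrictMono V) :
    Maximal (NilLe (On n) (Qset n) k)
        {A | A ∈ Qset n ∧ ∀ i : Fin k, ∀ x ∈ V i.succ, A.mulVec x ∈ V i.castSucc} ∧
      nilClass (On n)
        {A | A ∈ Qset n ∧ ∀ i : Fin k, ∀ x ∈ V i.succ, A.mulVec x ∈ V i.castSucc} = k :=
  stmt12_general n k hk1 V h0 htop hmono

end NilSg
end

section
/- Let n ≥ 2. Every maximal nilpotent subsemigroup of Q_n (i.e. every maximal element, with respect to inclusion, of the set of all nilpotent subsemigroups of Q_n) has nilpotency class n-1, and any two maximal nilpotent subsemigroups of Q_n are isomorphic as semigroups. -/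
/-!
A matrix in `Q_n` fixes the all-ones vector `𝟙` and maps the hyperplane `V = {x | ∑ xᵢ = 0}`
into itself, and it is determined by its restriction to `V`; conversely every endomorphism of
`V`, extended by the identity on `ℝ 𝟙`, is a matrix in `Q_n`. So `Q_n` is isomorphic to the
multiplicative semigroup of `End V`, with `O_n` corresponding to `0`, and `dim V = n - 1`.

In `End V`, if all products of `k` elements of `T` vanish, then `T W` (the span of the images)
is a proper subspace of every nonzero `T`-invariant subspace `W`: otherwise `W` would be spanned
by the images of `W` under products of arbitrary length. Refining by hyperplanes gives a basis in
which `T` is strictly triangular. Hence the maximal nilpotent subsemigroups are exactly the sets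
of strictly triangular endomorphisms with respect to some basis; the shift `bᵢ ↦ bᵢ₊₁` shows
that their class is `dim V`, and any two are conjugate by a change of basis.
-/

namespace NilSg

variable {M : Type*}

open Module Submodule Set

theorem foldl_mul_eq_prod_cons {M : Type*} [Monoid M] (a : M) (l : List M) :
    l.foldl (· * ·) a = (a :: l).prod := by
  induction l generalizing a with
  | nil => simp
  | cons b l ih => simp [ih, mul_assoc]

theorem prodEq_iff {M : Type*} [Monoid M] {z : M} {T : Set M} {k : ℕ} (hk : 0 < k) :
    ProdEq z T k ↔ ∀ l : List M, (∀ x ∈ l, x ∈ T) → l.length = k → l.prod = z := by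
  refine ⟨fun h l hl hlen => ?_, fun h a l ha hl hlen => ?_⟩
  · obtain _ | ⟨a, l⟩ := l
    · simp at hlen; omega
    · rw [← foldl_mul_eq_prod_cons]
      exact h a l (hl a List.mem_cons_self) (fun x hx => hl x (List.mem_cons_of_mem a hx)) hlen
  · rw [foldl_mul_eq_prod_cons]
    exact h _ (by simpa [ha] using hl) (by simpa using hlen)

section Transport

theorem exists_list_map_eq {α β : Type*} {f : α → β} {T : Set α} {l : List β}
    (hl : ∀ x ∈ l, x ∈ f '' T) :
    ∃ l' : List α, (∀ x ∈ l', x ∈ T) ∧ l'.map f = l := by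
  induction l with
  | nil => exact ⟨[], by simp, rfl⟩
  | cons x l ih =>
    obtain ⟨y, hy, rfl⟩ := hl x List.mem_cons_self
    obtain ⟨l', hl', rfl⟩ := ih fun z hz => hl z (List.mem_cons_of_mem _ hz)
    exact ⟨y :: l', by simpa [hy] using hl', rfl⟩

variable {M N : Type*} [Mul M] [Mul N] {σ : N →ₙ* M}

theorem map_foldl_mul (a : N) (l : List N) :
    σ (l.foldl (· * ·) a) = (l.map σ).foldl (· * ·) (σ a) := by
  induction l generalizing a with
  | nil => rfl
  | cons b l ih => simp [ih]

theorem prodEq_image_iff (hσ : Function.Injective σ) {z : N} {T : Set N} {k : ℕ} :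
    ProdEq (σ z) (σ '' T) k ↔ ProdEq z T k := by
  refine ⟨fun h a l ha hl hlen => hσ ?_, fun h _ l ⟨a, ha, hσa⟩ hl hlen => ?_⟩
  · rw [map_foldl_mul]
    exact h _ _ (mem_image_of_mem σ ha) (by simpa using fun x hx => mem_image_of_mem σ (hl x hx))
      (by simpa using hlen)
  · obtain ⟨l', hl', rfl⟩ := exists_list_map_eq hl
    rw [← hσa, ← map_foldl_mul, h a l' ha hl' (by simpa using hlen)]

theorem isSubsg_image_iff (hσ : Function.Injective σ) {T : Set N} :
    IsSubsg (σ '' T) ↔ IsSubsg T := by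
  refine ⟨fun h a ha b hb => ?_, fun h _ ⟨a, ha, hσa⟩ _ ⟨b, hb, hσb⟩ =>
    ⟨a * b, h ha hb, by rw [map_mul, hσa, hσb]⟩⟩
  rw [← hσ.mem_set_image, map_mul]
  exact h (mem_image_of_mem σ ha) (mem_image_of_mem σ hb)

theorem isNilSubsg_image_iff (hσ : Function.Injective σ) {z : N} {T : Set N} :
    IsNilSubsg (σ z) (σ '' T) ↔ IsNilSubsg z T :=
  and_congr (isSubsg_image_iff hσ) (exists_congr fun _ => and_congr_right' (prodEq_image_iff hσ))

theorem nilClass_image (hσ : Function.Injective σ) (z : N) (T : Set N) :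
    nilClass (σ z) (σ '' T) = nilClass z T := by
  simp only [nilClass, prodEq_image_iff hσ]

theorem exists_maximal_image_eq (hσ : Function.Injective σ) {z : N} {T : Set M}
    (hT : Maximal (NilIn (σ z) (range σ)) T) :
    ∃ T' : Set N, Maximal (IsNilSubsg z) T' ∧ σ '' T' = T := by
  have hT' : σ '' (σ ⁻¹' T) = T := image_preimage_eq_of_subset hT.prop.1
  refine ⟨σ ⁻¹' T, ⟨?_, fun U hU hTU => ?_⟩, hT'⟩
  · rw [← isNilSubsg_image_iff hσ, hT']
    exact hT.prop.2
  · refine image_subset_iff.1 (hT.le_of_ge ⟨image_subset_range σ U, ?_⟩ ?_)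
    · exact (isNilSubsg_image_iff hσ).2 hU
    · exact hT' ▸ image_mono hTU

theorem exists_bijOn_image_map_mul [Nonempty N] (hσ : Function.Injective σ) {T₁ T₂ : Set N}
    {f : N → N} (hf : BijOn f T₁ T₂) (hmul : ∀ a ∈ T₁, ∀ b ∈ T₁, f (a * b) = f a * f b) :
    ∃ g : M → M, BijOn g (σ '' T₁) (σ '' T₂) ∧
      ∀ a ∈ σ '' T₁, ∀ b ∈ σ '' T₁, g (a * b) = g a * g b := by
  have hinv : ∀ a, Function.invFun σ (σ a) = a := Function.leftInverse_invFun hσ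
  have hσinv : BijOn (Function.invFun σ) (σ '' T₁) T₁ :=
    hσ.injOn.bijOn_image.symm ⟨by rintro _ ⟨a, -, rfl⟩; rw [hinv], fun a _ => hinv a⟩
  refine ⟨σ ∘ f ∘ Function.invFun σ, (hσ.injOn.bijOn_image.comp hf).comp hσinv, ?_⟩
  rintro _ ⟨a, ha, rfl⟩ _ ⟨b, hb, rfl⟩
  simp only [Function.comp_apply, ← map_mul, hinv, hmul a ha b hb]

end Transport

section Triangular

variable {K V ι : Type*} [Field K] [AddCommGroup V] [Module K V] [LinearOrder ι]

def strictLowerTriangular (b : Basis ι K V) : Set (Module.End K V) :=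
  {φ | ∀ i, φ (b i) ∈ span K (b '' Ioi i)}

theorem map_span_Ioi_le {b : Basis ι K V} {φ : Module.End K V}
    (hφ : φ ∈ strictLowerTriangular b) (i : ι) :
    (span K (b '' Ioi i)).map φ ≤ span K (b '' Ioi i) := by
  rw [map_span, span_le]
  rintro _ ⟨_, ⟨j, hj, rfl⟩, rfl⟩
  exact span_mono (image_mono (Ioi_subset_Ioi hj.le)) (hφ j)

theorem isSubsg_strictLowerTriangular (b : Basis ι K V) :
    IsSubsg (strictLowerTriangular b) :=
  fun _ hφ _ hψ i => map_span_Ioi_le hφ i (mem_map_of_mem (hψ i))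

theorem map_span_ge_le {m : ℕ} {b : Basis (Fin m) K V} {φ : Module.End K V}
    (hφ : φ ∈ strictLowerTriangular b) (k : ℕ) :
    (span K (b '' {j | k ≤ (j : ℕ)})).map φ ≤ span K (b '' {j | k + 1 ≤ (j : ℕ)}) := by
  rw [map_span, span_le]
  rintro _ ⟨_, ⟨j, hj, rfl⟩, rfl⟩
  refine span_mono (image_mono fun i (hi : j < i) => ?_) (hφ j)
  exact Nat.succ_le_of_lt (lt_of_le_of_lt hj hi)

theorem map_list_prod_span_ge_le {m : ℕ} {b : Basis (Fin m) K V} {l : List (Module.End K V)}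
    (hl : ∀ φ ∈ l, φ ∈ strictLowerTriangular b) (k : ℕ) :
    (span K (b '' {j | k ≤ (j : ℕ)})).map l.prod ≤
      span K (b '' {j | k + l.length ≤ (j : ℕ)}) := by
  induction l generalizing k with
  | nil => simp [Module.End.one_eq_id]
  | cons φ l ih =>
    rw [List.prod_cons, Module.End.mul_eq_comp, map_comp]
    refine (map_mono (ih (fun ψ hψ => hl ψ (List.mem_cons_of_mem φ hψ)) k)).trans ?_
    refine (map_span_ge_le (hl φ List.mem_cons_self) _).trans (span_mono (image_mono ?_))
    intro j hj
    simp only [mem_ofPred_eq, List.length_cons] at hj ⊢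
    omega

theorem list_prod_eq_zero_of_strictLowerTriangular {m : ℕ} {b : Basis (Fin m) K V}
    {l : List (Module.End K V)} (hl : ∀ φ ∈ l, φ ∈ strictLowerTriangular b) (hm : m ≤ l.length) :
    l.prod = 0 := by
  have h := map_list_prod_span_ge_le hl 0
  have hempty : {j : Fin m | 0 + l.length ≤ (j : ℕ)} = ∅ :=
    eq_empty_of_forall_notMem fun j hj => by
      have := j.isLt; simp only [mem_ofPred_eq] at hj; omega
  simp only [zero_le, ofPred_true, image_univ, Basis.span_eq, hempty, image_empty,
    span_empty, Submodule.map_top, le_bot_iff, LinearMap.range_eq_bot] at h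
  exact h

theorem isNilSubsg_strictLowerTriangular {m : ℕ} (b : Basis (Fin m) K V) :
    IsNilSubsg 0 (strictLowerTriangular b) :=
  ⟨isSubsg_strictLowerTriangular b, m + 1, m.succ_pos, (prodEq_iff m.succ_pos).2
    fun _ hl hlen => list_prod_eq_zero_of_strictLowerTriangular hl (by omega)⟩

theorem eq_bot_of_le_iSup_map {T : Set (Module.End K V)} {k : ℕ} (hk : 0 < k)
    (hT : ProdEq 0 T k) {W : Submodule K V} (hW : W ≤ ⨆ φ ∈ T, W.map φ) : W = ⊥ := by
  let Kills (j : ℕ) : Prop :=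
    ∀ l : List (Module.End K V), (∀ φ ∈ l, φ ∈ T) → l.length = j → W ≤ LinearMap.ker l.prod
  -- A product killing `φ W` for every `φ ∈ T` kills their span, which contains `W`.
  have step : ∀ j, Kills (j + 1) → Kills j := fun j h l hl hlen =>
    hW.trans <| iSup₂_le fun φ hφ => map_le_iff_le_comap.2 fun v hv => by
      have := h (l ++ [φ]) (by simpa [or_imp, forall_and] using ⟨hl, hφ⟩) (by simp [hlen]) hv
      simpa [List.prod_append] using this
  have hKk : Kills k := fun l hl hlen => by simp [((prodEq_iff hk).1 hT) l hl hlen]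
  have hK0 : Kills 0 := Nat.decreasingInduction (motive := fun j _ => Kills j)
    (fun j _ => step j) hKk (Nat.zero_le k)
  simpa [Module.End.one_eq_id] using hK0 [] (by simp) rfl

theorem exists_linearIndependent_triangular [FiniteDimensional K V] {T : Set (Module.End K V)}
    {k : ℕ} (hk : 0 < k) (hT : ProdEq 0 T k) (W : Submodule K V) (hW : ∀ φ ∈ T, W.map φ ≤ W) :
    ∃ (m : ℕ) (w : Fin m → V), LinearIndependent K w ∧ span K (range w) = W ∧
      ∀ φ ∈ T, ∀ i, φ (w i) ∈ span K (w '' Ioi i) := by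
  induction W using WellFoundedLT.induction with
  | ind W ih =>
  rcases eq_or_ne W ⊥ with rfl | hW0
  · exact ⟨0, Fin.elim0, linearIndependent_empty_type, by simp, fun _ _ i => i.elim0⟩
  have hlt : (⨆ φ ∈ T, W.map φ) < W :=
    lt_of_le_of_ne (iSup₂_le hW) fun h => hW0 (eq_bot_of_le_iSup_map hk hT h.ge)
  -- A hyperplane `H` of `W` containing `T W` is `T`-invariant; a vector `x ∈ W \ H` goes in front.
  obtain ⟨H, hUH, hHW⟩ := exists_le_covBy_of_lt hlt
  have hTH : ∀ φ ∈ T, W.map φ ≤ H := fun φ hφ => (le_iSup₂ (f := fun φ _ => W.map φ) φ hφ).trans hUH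
  obtain ⟨m, w, hw, hspan, htri⟩ :=
    ih H hHW.lt fun φ hφ => (map_mono hHW.le).trans (hTH φ hφ)
  obtain ⟨x, hxW, hxH⟩ := SetLike.exists_of_lt hHW.lt
  have hWeq : K ∙ x ⊔ H = W :=
    (hHW.eq_or_eq le_sup_right (sup_le ((span_singleton_le_iff_mem x W).2 hxW) hHW.le)).resolve_left
      fun h => hxH (h ▸ mem_sup_left (mem_span_singleton_self x))
  have hcons : ∀ j, (Fin.cons x w : Fin (m + 1) → V) j.succ = w j := fun j => by simp
  refine ⟨m + 1, Fin.cons x w, linearIndependent_finCons.2 ⟨hw, hspan ▸ hxH⟩,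
    by rw [Fin.range_cons, span_insert, hspan, hWeq], fun φ hφ i => ?_⟩
  refine Fin.cases ?_ (fun i => ?_) i
  · refine span_mono ?_ (hspan ▸ hTH φ hφ (mem_map_of_mem hxW))
    rintro _ ⟨j, rfl⟩
    exact ⟨j.succ, Fin.succ_pos j, hcons j⟩
  · refine hcons i ▸ span_mono ?_ (htri φ hφ i)
    rintro _ ⟨j, hj, rfl⟩
    exact ⟨j.succ, Fin.succ_lt_succ_iff.2 hj, hcons j⟩

theorem exists_subset_strictLowerTriangular [FiniteDimensional K V] {T : Set (Module.End K V)}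
    (hT : IsNilSubsg 0 T) : ∃ (m : ℕ) (b : Basis (Fin m) K V), T ⊆ strictLowerTriangular b := by
  obtain ⟨-, k, hk, hTk⟩ := hT
  obtain ⟨m, w, hw, hspan, htri⟩ :=
    exists_linearIndependent_triangular hk hTk ⊤ fun _ _ => le_top
  exact ⟨m, Basis.mk hw hspan.ge, fun φ hφ i => by simpa using htri φ hφ i⟩

theorem exists_eq_strictLowerTriangular_of_maximal [FiniteDimensional K V]
    {T : Set (Module.End K V)} (hT : Maximal (IsNilSubsg 0) T) :
    ∃ (m : ℕ) (b : Basis (Fin m) K V), T = strictLowerTriangular b := by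
  obtain ⟨m, b, hTb⟩ := exists_subset_strictLowerTriangular hT.prop
  exact ⟨m, b, hT.eq_of_subset (isNilSubsg_strictLowerTriangular b) hTb⟩

theorem exists_mem_strictLowerTriangular_pow_ne_zero {m : ℕ} (b : Basis (Fin m) K V) :
    ∃ s ∈ strictLowerTriangular b, ∀ k < m, s ^ k ≠ 0 := by
  let s := b.constr K fun i : Fin m => if h : (i : ℕ) + 1 < m then b ⟨i + 1, h⟩ else 0
  have hs (i : Fin m) : s (b i) = if h : (i : ℕ) + 1 < m then b ⟨i + 1, h⟩ else 0 :=
    b.constr_basis K _ i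
  have hpow (k : ℕ) (hk : k < m) : (s ^ k) (b ⟨0, by omega⟩) = b ⟨k, hk⟩ := by
    induction k with
    | zero => simp
    | succ k ih => rw [pow_succ', Module.End.mul_apply, ih (by omega), hs, dif_pos hk]
  refine ⟨s, fun i => ?_, fun k hk h => b.ne_zero ⟨k, hk⟩ ?_⟩
  · rw [hs]
    split_ifs with h
    · exact subset_span ⟨_, Fin.lt_def.2 (Nat.lt_succ_self _), rfl⟩
    · exact zero_mem _
  · rw [← hpow k hk, h, LinearMap.zero_apply]

theorem nilClass_strictLowerTriangular {m : ℕ} (b : Basis (Fin m) K V) (hm : 0 < m) :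
    nilClass 0 (strictLowerTriangular b) = m := by
  have hmem : m ∈ {k | 0 < k ∧ ProdEq 0 (strictLowerTriangular b) k} :=
    ⟨hm, (prodEq_iff hm).2 fun _ hl hlen => list_prod_eq_zero_of_strictLowerTriangular hl hlen.ge⟩
  obtain ⟨s, hs, hpow⟩ := exists_mem_strictLowerTriangular_pow_ne_zero b
  refine le_antisymm (Nat.sInf_le hmem) (le_csInf ⟨m, hmem⟩ fun k ⟨hk, hP⟩ => ?_)
  by_contra! hkm
  refine hpow k hkm ?_
  rw [← List.prod_replicate]
  exact (prodEq_iff hk).1 hP _ (fun x hx => List.eq_of_mem_replicate hx ▸ hs) List.length_replicate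

theorem conjRingEquiv_mem_strictLowerTriangular {V' : Type*} [AddCommGroup V'] [Module K V']
    {b : Basis ι K V} {b' : Basis ι K V'} {e : V ≃ₗ[K] V'}
    (he : ∀ i, e (b i) = b' i) {φ : Module.End K V} (hφ : φ ∈ strictLowerTriangular b) :
    e.conjRingEquiv φ ∈ strictLowerTriangular b' := by
  intro i
  have key := apply_mem_span_image_of_mem_span e.toLinearMap (hφ i)
  simp only [image_image, LinearEquiv.coe_coe, he] at key
  rwa [← he i, LinearEquiv.conjRingEquiv_apply_apply, e.symm_apply_apply]

theorem bijOn_conjRingEquiv_strictLowerTriangular {V' : Type*} [AddCommGroup V'] [Module K V']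
    (b : Basis ι K V) (b' : Basis ι K V') :
    BijOn (b.equiv b' (Equiv.refl ι)).conjRingEquiv
      (strictLowerTriangular b) (strictLowerTriangular b') := by
  set e := b.equiv b' (Equiv.refl ι)
  have he (i : ι) : e (b i) = b' i := b.equiv_apply i b' _
  have he' (i : ι) : e.symm (b' i) = b i := e.symm_apply_eq.2 (he i).symm
  refine ⟨fun φ hφ => conjRingEquiv_mem_strictLowerTriangular he hφ,
    e.conjRingEquiv.injective.injOn, fun ψ hψ => ⟨e.symm.conjRingEquiv ψ,
      conjRingEquiv_mem_strictLowerTriangular he' hψ, by ext; simp⟩⟩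

theorem nilClass_of_maximal [FiniteDimensional K V] (hV : 0 < finrank K V)
    {T : Set (Module.End K V)} (hT : Maximal (IsNilSubsg 0) T) : nilClass 0 T = finrank K V := by
  obtain ⟨m, b, rfl⟩ := exists_eq_strictLowerTriangular_of_maximal hT
  rw [finrank_eq_card_basis b, Fintype.card_fin] at hV ⊢
  exact nilClass_strictLowerTriangular b hV

theorem exists_ringEquiv_bijOn_of_maximal [FiniteDimensional K V] {T₁ T₂ : Set (Module.End K V)}
    (h₁ : Maximal (IsNilSubsg 0) T₁) (h₂ : Maximal (IsNilSubsg 0) T₂) :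
    ∃ f : Module.End K V ≃+* Module.End K V, BijOn f T₁ T₂ := by
  obtain ⟨m₁, b₁, rfl⟩ := exists_eq_strictLowerTriangular_of_maximal h₁
  obtain ⟨m₂, b₂, rfl⟩ := exists_eq_strictLowerTriangular_of_maximal h₂
  obtain rfl : m₁ = m₂ := by
    simpa using (finrank_eq_card_basis b₁).symm.trans (finrank_eq_card_basis b₂)
  exact ⟨_, bijOn_conjRingEquiv_strictLowerTriangular b₁ b₂⟩

end Triangular

section ExtendById

variable {R E : Type*} [Ring R] [AddCommGroup E] [Module R E] {p q : Submodule R E}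

noncomputable def extendById (h : IsCompl p q) : Module.End R p →* Module.End R E where
  toFun φ := LinearMap.ofIsCompl h (p.subtype ∘ₗ φ) q.subtype
  map_one' := LinearMap.ofIsCompl_eq h (fun _ => rfl) fun _ => rfl
  map_mul' φ ψ := LinearMap.ofIsCompl_eq h (fun u => by simp) fun u => by simp

@[simp]
theorem extendById_apply_left (h : IsCompl p q) (φ : Module.End R p) (u : p) :
    extendById h φ u = φ u :=
  LinearMap.ofIsCompl_apply_left h u

@[simp]
theorem extendById_apply_right (h : IsCompl p q) (φ : Module.End R p) (u : q) :
    extendById h φ u = u :=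
  LinearMap.ofIsCompl_apply_right h u

theorem extendById_injective (h : IsCompl p q) : Function.Injective (extendById h) :=
  fun φ ψ hφψ => LinearMap.ext fun u => Subtype.ext <| by
    simpa using LinearMap.congr_fun hφψ u

theorem mem_range_extendById_iff (h : IsCompl p q) {f : Module.End R E} :
    f ∈ range (extendById h) ↔ (∀ u ∈ p, f u ∈ p) ∧ ∀ u ∈ q, f u = u := by
  refine ⟨?_, fun ⟨hp, hq⟩ => ⟨f.restrict hp,
    LinearMap.ofIsCompl_eq h (fun _ => rfl) fun u => (hq u u.2).symm⟩⟩
  rintro ⟨φ, rfl⟩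
  exact ⟨fun u hu => (extendById_apply_left h φ ⟨u, hu⟩).symm ▸ (φ ⟨u, hu⟩).2,
    fun u hu => extendById_apply_right h φ ⟨u, hu⟩⟩

end ExtendById

section Qset

open Matrix

variable {n : ℕ}

def coordSum (n : ℕ) : (Fin n → ℝ) →ₗ[ℝ] ℝ := ∑ i, LinearMap.proj i

theorem coordSum_apply (x : Fin n → ℝ) : coordSum n x = ∑ i, x i := by
  simp [coordSum]

theorem Vsub_eq_ker : Vsub n = LinearMap.ker (coordSum n) := by
  ext x
  simp [coordSum_apply, Vsub]

theorem isCompl_Vsub (n : ℕ) [NeZero n] : IsCompl (Vsub n) (ℝ ∙ 1) := by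
  refine isCompl_span_singleton_of_isCoatom_of_notMem ?_ ?_
  · rw [Vsub_eq_ker]
    exact LinearMap.isCoatom_ker_of_surjective fun c => ⟨Pi.single 0 c, by simp [coordSum_apply]⟩
  · simp [Vsub, NeZero.ne]

theorem finrank_Vsub (n : ℕ) [NeZero n] : finrank ℝ (Vsub n) = n - 1 := by
  have := Submodule.finrank_add_eq_of_isCompl (isCompl_Vsub n)
  rw [finrank_span_singleton one_ne_zero, Module.finrank_fin_fun] at this
  omega

theorem coordSum_mulVec {A : Matrix (Fin n) (Fin n) ℝ} (hA : ∀ j, ∑ i, A i j = 1)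
    (x : Fin n → ℝ) : coordSum n (A *ᵥ x) = coordSum n x := by
  simp only [coordSum_apply, mulVec, dotProduct]
  rw [Finset.sum_comm]
  simp [← Finset.sum_mul, hA]

theorem mem_Qset_iff_s14 [NeZero n] {A : Matrix (Fin n) (Fin n) ℝ} :
    A ∈ Qset n ↔ toLin' A ∈ range (extendById (isCompl_Vsub n)) := by
  rw [mem_range_extendById_iff]
  simp only [toLin'_apply]
  refine ⟨fun ⟨hrow, hcol⟩ => ⟨fun v hv => ?_, fun u hu => ?_⟩,
    fun ⟨hV, hL⟩ => ⟨fun i => ?_, fun j => ?_⟩⟩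
  · rw [Vsub_eq_ker, LinearMap.mem_ker] at hv ⊢
    rwa [coordSum_mulVec hcol]
  · obtain ⟨c, rfl⟩ := mem_span_singleton.1 hu
    rw [mulVec_smul]
    congr 1
    ext i
    simp [mulVec, dotProduct, hrow i]
  · simpa [mulVec, dotProduct] using congrFun (hL 1 (mem_span_singleton_self 1)) i
  · have hsum : coordSum n ∘ₗ toLin' A = coordSum n := by
      refine LinearMap.ext_on
        (s := (Vsub n : Set (Fin n → ℝ)) ∪ (ℝ ∙ (1 : Fin n → ℝ) : Set (Fin n → ℝ)))
        (by rw [span_union, span_eq, span_eq, (isCompl_Vsub n).sup_eq_top]) ?_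
      rintro x (hx | hx)
      · have hAx := hV x hx
        rw [SetLike.mem_coe, Vsub_eq_ker, LinearMap.mem_ker] at hx
        rw [Vsub_eq_ker, LinearMap.mem_ker] at hAx
        simp [hx, hAx]
      · simp [hL x hx]
    simpa [coordSum_apply, mulVec_single_one] using LinearMap.congr_fun hsum (Pi.single j 1)

theorem On_mulVec (x : Fin n → ℝ) : On n *ᵥ x = ((n : ℝ)⁻¹ * ∑ i, x i) • 1 := by
  ext
  simp [On, mulVec, dotProduct, Finset.mul_sum]

noncomputable def endToMatrix (n : ℕ) [NeZero n] :
    Module.End ℝ (Vsub n) →ₙ* Matrix (Fin n) (Fin n) ℝ :=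
  ((LinearMap.toMatrixAlgEquiv' : Module.End ℝ (Fin n → ℝ) ≃ₐ[ℝ] _).toRingEquiv.toMonoidHom.comp
    (extendById (isCompl_Vsub n))).toMulHom

theorem endToMatrix_apply [NeZero n] (φ : Module.End ℝ (Vsub n)) :
    endToMatrix n φ = LinearMap.toMatrix' (extendById (isCompl_Vsub n) φ) :=
  rfl

theorem endToMatrix_injective (n : ℕ) [NeZero n] : Function.Injective (endToMatrix n) :=
  fun _ _ h => extendById_injective _ (LinearMap.toMatrix'.injective h)

theorem range_endToMatrix (n : ℕ) [NeZero n] : range (endToMatrix n) = Qset n := by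
  ext A
  rw [mem_Qset_iff_s14]
  constructor
  · rintro ⟨φ, rfl⟩
    exact ⟨φ, by rw [endToMatrix_apply, toLin'_toMatrix']⟩
  · rintro ⟨φ, hφ⟩
    exact ⟨φ, by rw [endToMatrix_apply, hφ, LinearMap.toMatrix'_toLin']⟩

theorem endToMatrix_zero (n : ℕ) [NeZero n] : endToMatrix n 0 = On n := by
  rw [endToMatrix_apply, ← LinearMap.toMatrix'_toLin' (On n)]
  congr 1
  refine LinearMap.ofIsCompl_eq _ (fun u => ?_) fun u => ?_
  · have hu : ∑ i, (u : Fin n → ℝ) i = 0 := u.2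
    simp [On_mulVec, hu]
  · obtain ⟨c, hc⟩ := mem_span_singleton.1 u.2
    simp [On_mulVec, ← hc, NeZero.ne]

end Qset

/-- Every maximal nilpotent subsemigroup of `Q_n` has nilpotency
class `n - 1`, and any two maximal nilpotent subsemigroups of `Q_n` are isomorphic
as semigroups. -/
theorem stmt14 (n : ℕ) (hn : 2 ≤ n) :
    (∀ T : Set (Matrix (Fin n) (Fin n) ℝ), Maximal (NilIn (On n) (Qset n)) T →
        nilClass (On n) T = n - 1) ∧
      ∀ T₁ T₂ : Set (Matrix (Fin n) (Fin n) ℝ),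
        Maximal (NilIn (On n) (Qset n)) T₁ → Maximal (NilIn (On n) (Qset n)) T₂ →
        ∃ f : Matrix (Fin n) (Fin n) ℝ → Matrix (Fin n) (Fin n) ℝ,
          Set.BijOn f T₁ T₂ ∧ ∀ a ∈ T₁, ∀ b ∈ T₁, f (a * b) = f a * f b := by
  have : NeZero n := ⟨by omega⟩
  have hσ := endToMatrix_injective n
  have hdim : 0 < finrank ℝ (Vsub n) := by rw [finrank_Vsub]; omega
  rw [← range_endToMatrix, ← endToMatrix_zero]
  refine ⟨fun T hT => ?_, fun T₁ T₂ h₁ h₂ => ?_⟩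
  · obtain ⟨T', hT', rfl⟩ := exists_maximal_image_eq hσ hT
    rw [nilClass_image hσ, nilClass_of_maximal hdim hT', finrank_Vsub]
  · obtain ⟨T₁', h₁', rfl⟩ := exists_maximal_image_eq hσ h₁
    obtain ⟨T₂', h₂', rfl⟩ := exists_maximal_image_eq hσ h₂
    obtain ⟨f, hf⟩ := exists_ringEquiv_bijOn_of_maximal h₁' h₂'
    exact exists_bijOn_image_map_mul hσ hf fun a _ b _ => map_mul f a b

end NilSg
end

section
/- Let S_2 be a semigroup with zero element 0 such that for every k ∈ ℕ, every element of Nil_k(S_2) is contained in some maximal element of Nil_k(S_2), and let S_1 be a subsemigroup of S_2 containing 0. Then every maximal element T_1 of Nil_k(S_1) whose nilpotency class equals k has the form T_1 = S_1 ∩ T_2, where T_2 is some maximal element of Nil_k(S_2) whose nilpotency class equals k. -/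
namespace NilSg

variable {M : Type*}

theorem prodEq_mono [Mul M] {z : M} {T T' : Set M} (h : T ⊆ T') {k : ℕ}
    (hp : ProdEq z T' k) : ProdEq z T k :=
  fun a l ha hl hk => hp a l (h ha) (fun x hx => h (hl x hx)) hk

/-- If in a semigroup `S₂` with zero every element of `Nil_k(S₂)` is
contained in a maximal element of `Nil_k(S₂)` (for every `k`), and `S₁` is a
subsemigroup of `S₂` containing `0`, then every maximal element `T₁` of `Nil_k(S₁)`
of nilpotency class exactly `k` has the form `T₁ = S₁ ∩ T₂` for some maximal element
`T₂` of `Nil_k(S₂)` of nilpotency class exactly `k`. -/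
theorem stmt15 {S₂ : Type*} [SemigroupWithZero S₂]
    (S₁ : Set S₂) (hS₁ : IsSubsg S₁) (h0 : (0 : S₂) ∈ S₁)
    (h : ∀ k : ℕ, ∀ T : Set S₂, NilLe (0 : S₂) Set.univ k T →
      ∃ T', Maximal (NilLe (0 : S₂) Set.univ k) T' ∧ T ⊆ T') :
    ∀ k : ℕ, ∀ T₁ : Set S₂, Maximal (NilLe (0 : S₂) S₁ k) T₁ →
      nilClass (0 : S₂) T₁ = k →
      ∃ T₂ : Set S₂, Maximal (NilLe (0 : S₂) Set.univ k) T₂ ∧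
        nilClass (0 : S₂) T₂ = k ∧ T₁ = S₁ ∩ T₂ := by
  intro k T₁ hmax hcls
  obtain ⟨hT₁S, hT₁nil, hT₁le⟩ := hmax.prop
  obtain ⟨T₂, hT₂max, hsub12⟩ := h k T₁ ⟨Set.subset_univ _, hT₁nil, hT₁le⟩
  obtain ⟨hT₂sg, k', hk'pos, hk'pe⟩ := hT₂max.prop.2.1
  -- the nilClass of T₂ is attained
  have hne : {m | 0 < m ∧ ProdEq (0 : S₂) T₂ m}.Nonempty := ⟨k', hk'pos, hk'pe⟩
  have hmem := Nat.sInf_mem hne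
  have hc₂pos : 0 < nilClass (0 : S₂) T₂ := hmem.1
  have hc₂pe : ProdEq (0 : S₂) T₂ (nilClass (0 : S₂) T₂) := hmem.2
  -- nilClass T₁ ≤ nilClass T₂
  have hmono : nilClass (0 : S₂) T₁ ≤ nilClass (0 : S₂) T₂ :=
    Nat.sInf_le ⟨hc₂pos, prodEq_mono hsub12 hc₂pe⟩
  have hc₂k : nilClass (0 : S₂) T₂ = k :=
    le_antisymm hT₂max.prop.2.2 (hcls ▸ hmono)
  -- S₁ ∩ T₂ is in Nil_k(S₁)
  have hinter : NilLe (0 : S₂) S₁ k (S₁ ∩ T₂) := by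
    refine ⟨Set.inter_subset_left, ⟨?_, nilClass (0 : S₂) T₂, hc₂pos,
      prodEq_mono Set.inter_subset_right hc₂pe⟩, ?_⟩
    · intro a ha b hb
      exact ⟨hS₁ ha.1 hb.1, hT₂sg ha.2 hb.2⟩
    · exact le_trans (Nat.sInf_le ⟨hc₂pos, prodEq_mono Set.inter_subset_right hc₂pe⟩)
        (le_of_eq hc₂k)
  have hsub : T₁ ⊆ S₁ ∩ T₂ := Set.subset_inter hT₁S hsub12
  exact ⟨T₂, hT₂max, hc₂k, le_antisymm hsub (hmax.2 hinter hsub)⟩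

end NilSg
end
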